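/- Let f : ℝ^d → ℝ be differentiable, convex, bounded below, 𝐋-smooth for a symmetric positive semidefinite matrix 𝐋, and μ-strongly convex with μ > 0. Let R : ℝ^d → ℝ ∪ {+∞} be proper, convex and lower semicontinuous, and let x* be a minimizer of f + R. Let S be a proper sampling with sketch C, set C̄ = 𝐋^{1/2} C 𝐋^{†1/2}, L̄ = λmax(P̄ ∘ 𝐋) and L̃ = λmax(P̃ ∘ 𝐋), and let 0 < γ ≤ 1/(2 L̄). Define random iterates by a fixed x^0 and x^{k+1} = prox_{γR}(x^k − γ C̄_k ∇f(x^k)), where C̄_k = 𝐋^{1/2} C_k 𝐋^{†1/2} with C_0, C_1, … independent copies of C, and prox_{γR}(z) is the unique minimizer of u ↦ γ R(u) + ½ ‖u − z‖². Then for every k ≥ 0, E[‖x^k − x*‖²] ≤ (1 − γμ)^k ‖x^0 − x*‖² + (2 γ L̃ / μ) ‖∇f(x*)‖²_{𝐋†}. -/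

import Mathlib

/-!
Strong convexity and `𝐋`-smoothness give `μ‖x‖² ≤ xᵀ𝐋x`, so `𝐋` is invertible, `𝐋† = 𝐋⁻¹` and
`𝐋^{1/2} 𝐋^{†1/2} = 1`; hence the sketched gradient `C̄ ∇f(x)` is unbiased. Since
`x* = prox_{γR}(x* − γ∇f(x*))` and the prox is nonexpansive, one step gives
`E‖x⁺ − x*‖² ≤ ‖x − x*‖² − 2γ⟨x − x*, ∇f(x) − ∇f(x*)⟩ + γ² E‖C̄∇f(x) − ∇f(x*)‖²`.
The second moments `E[C𝐋C] = P̄ ∘ 𝐋` and `E[(C − I)𝐋(C − I)] = P̃ ∘ 𝐋`, together with the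
cocoercivity bound `‖∇f(x) − ∇f(x*)‖²_{𝐋†} ≤ 2 D_f(x, x*)`, bound the last term by
`4 L̄ D_f(x, x*) + 2 L̃ ‖∇f(x*)‖²_{𝐋†}`. Strong convexity bounds the cross term, and `γ ≤ 1/(2L̄)`
lets it absorb the Bregman term, leaving `(1 − γμ)‖x − x*‖² + 2γ² L̃ ‖∇f(x*)‖²_{𝐋†}`; unrolling
this recursion sums a geometric series.
-/

open scoped BigOperators RealInnerProductSpace
open Matrix

noncomputable section

/-- A proper sampling on `{1,…,d}`: a finitely supported probability distribution over
subsets of `Fin d` whose marginal probabilities are all positive. -/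
structure Sampling (d : ℕ) where
  prob : Finset (Fin d) → ℝ
  nonneg : ∀ S, 0 ≤ prob S
  total : ∑ S : Finset (Fin d), prob S = 1
  margPos : ∀ j : Fin d, 0 < ∑ S : Finset (Fin d), if j ∈ S then prob S else 0

namespace Sampling

variable {d : ℕ} (μ : Sampling d)

/-- Marginal probability `p_j = Prob(j ∈ S)`. -/
def marg (j : Fin d) : ℝ := ∑ S : Finset (Fin d), if j ∈ S then μ.prob S else 0

/-- Probability matrix `P`, with entries `p_{jl} = Prob({j,l} ⊆ S)`. -/
def probMatrix : Matrix (Fin d) (Fin d) ℝ :=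
  Matrix.of fun j l => ∑ S : Finset (Fin d), if j ∈ S ∧ l ∈ S then μ.prob S else 0

/-- The matrix `P̄` with entries `p_{jl}/(p_j p_l)`. -/
def Pbar : Matrix (Fin d) (Fin d) ℝ :=
  Matrix.of fun j l => μ.probMatrix j l / (μ.marg j * μ.marg l)

/-- The matrix `P̃ = P̄ − E` where `E` is the all-ones matrix. -/
def Ptilde : Matrix (Fin d) (Fin d) ℝ := μ.Pbar - Matrix.of fun _ _ => (1 : ℝ)

/-- The unbiased diagonal sketch `C` associated with a realization `S` of the sampling. -/
def sketch (S : Finset (Fin d)) : Matrix (Fin d) (Fin d) ℝ :=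
  Matrix.diagonal fun j => if j ∈ S then (μ.marg j)⁻¹ else 0

end Sampling

/-- Largest eigenvalue of a symmetric matrix, via the Rayleigh quotient. -/
def lambdaMax {d : ℕ} (M : Matrix (Fin d) (Fin d) ℝ) : ℝ :=
  sSup {r : ℝ | ∃ v : Fin d → ℝ, v ⬝ᵥ v = 1 ∧ r = v ⬝ᵥ M.mulVec v}

/-- Smallest eigenvalue of a symmetric matrix, via the Rayleigh quotient. -/
def lambdaMin {d : ℕ} (M : Matrix (Fin d) (Fin d) ℝ) : ℝ :=
  sInf {r : ℝ | ∃ v : Fin d → ℝ, v ⬝ᵥ v = 1 ∧ r = v ⬝ᵥ M.mulVec v}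

/-- `Mdag` is the Moore–Penrose pseudoinverse of `M`. -/
def IsMoorePenrose {m n : Type*} [Fintype m] [Fintype n]
    (M : Matrix m n ℝ) (Mdag : Matrix n m ℝ) : Prop :=
  M * Mdag * M = M ∧ Mdag * M * Mdag = Mdag ∧
    (M * Mdag)ᵀ = M * Mdag ∧ (Mdag * M)ᵀ = Mdag * M

/-- Vectors in `ℝ^d` with the Euclidean inner product. -/
abbrev Vec (d : ℕ) := EuclideanSpace ℝ (Fin d)

/-- Action of a matrix on a Euclidean vector. -/
def mact {d e : ℕ} (M : Matrix (Fin e) (Fin d) ℝ) (x : Vec d) : Vec e :=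
  Matrix.toEuclideanLin M x

/-- Quadratic form `xᵀ M x`, i.e. the squared `M`-seminorm `‖x‖²_M`. -/
def quad {d : ℕ} (M : Matrix (Fin d) (Fin d) ℝ) (x : Vec d) : ℝ := ⟪x, mact M x⟫

/-- `f` is `M`-smooth: `f x ≤ f y + ⟨∇f(y), x−y⟩ + ½ (x−y)ᵀ M (x−y)` for all `x, y`. -/
def MSmooth {d : ℕ} (f : Vec d → ℝ) (M : Matrix (Fin d) (Fin d) ℝ) : Prop :=
  ∀ x y : Vec d, f x ≤ f y + ⟪gradient f y, x - y⟫ + (1 / 2) * quad M (x - y)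

/-- Random iterates driven by i.i.d. draws: `traj x0 step k ω` is the `k`-th iterate along
the sample path `ω` of `k` draws. -/
def traj {V Ω : Type*} (x0 : V) (step : V → Ω → V) : ∀ k : ℕ, (Fin k → Ω) → V
  | 0, _ => x0
  | k + 1, ω => step (traj x0 step k fun i => ω i.castSucc) (ω (Fin.last k))

/-- Expectation `E[φ(x^k)]` of a functional of the `k`-th iterate, over `k` i.i.d. draws
with one-step distribution `P`. -/
def trajExp {V Ω : Type*} [Fintype Ω] (P : Ω → ℝ) (x0 : V) (step : V → Ω → V)
    (φ : V → ℝ) (k : ℕ) : ℝ :=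
  ∑ ω : Fin k → Ω, (∏ i, P (ω i)) * φ (traj x0 step k ω)


/-- `u` is the unique minimizer of `w ↦ γ R(w) + ½‖w − z‖²` (the proximal point of `z`). -/
def IsProxPt {d : ℕ} (R : Vec d → EReal) (γ : ℝ) (z u : Vec d) : Prop :=
  (∀ w : Vec d,
      (γ : EReal) * R u + ((1 / 2 * ‖u - z‖ ^ 2 : ℝ) : EReal)
        ≤ (γ : EReal) * R w + ((1 / 2 * ‖w - z‖ ^ 2 : ℝ) : EReal)) ∧
  ∀ w : Vec d,
    (∀ w' : Vec d,
        (γ : EReal) * R w + ((1 / 2 * ‖w - z‖ ^ 2 : ℝ) : EReal)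
          ≤ (γ : EReal) * R w' + ((1 / 2 * ‖w' - z‖ ^ 2 : ℝ) : EReal)) →
    w = u

/-- `R : ℝ^d → ℝ ∪ {+∞}` is proper, convex and lower semicontinuous. -/
def ProperConvexLsc {d : ℕ} (R : Vec d → EReal) : Prop :=
  (∀ x, R x ≠ ⊥) ∧ (∃ x, R x ≠ ⊤) ∧
  (∀ x y : Vec d, ∀ a b : ℝ, 0 ≤ a → 0 ≤ b → a + b = 1 →
      R (a • x + b • y) ≤ (a : EReal) * R x + (b : EReal) * R y) ∧
  LowerSemicontinuous R

section MatrixAction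

variable {d : ℕ}

lemma ofLp_mact (M : Matrix (Fin d) (Fin d) ℝ) (x : Vec d) :
    WithLp.ofLp (mact M x) = M *ᵥ WithLp.ofLp x := rfl

lemma inner_eq_dotProduct (x y : Vec d) : ⟪x, y⟫ = WithLp.ofLp x ⬝ᵥ WithLp.ofLp y := by
  simp [EuclideanSpace.inner_eq_star_dotProduct, dotProduct_comm]

lemma norm_sq_eq_dotProduct (x : Vec d) : ‖x‖ ^ 2 = WithLp.ofLp x ⬝ᵥ WithLp.ofLp x := by
  rw [← real_inner_self_eq_norm_sq, inner_eq_dotProduct]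

lemma quad_eq_dotProduct (M : Matrix (Fin d) (Fin d) ℝ) (x : Vec d) :
    quad M x = WithLp.ofLp x ⬝ᵥ M *ᵥ WithLp.ofLp x := by
  rw [quad, inner_eq_dotProduct, ofLp_mact]

lemma mact_mul (A B : Matrix (Fin d) (Fin d) ℝ) (x : Vec d) :
    mact (A * B) x = mact A (mact B x) := by
  simp [mact]

@[simp]
lemma mact_one (x : Vec d) : mact 1 x = x := by
  simp [mact]

lemma mact_sub (M : Matrix (Fin d) (Fin d) ℝ) (x y : Vec d) :
    mact M (x - y) = mact M x - mact M y :=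
  map_sub _ x y

lemma sub_mact (A B : Matrix (Fin d) (Fin d) ℝ) (x : Vec d) :
    mact (A - B) x = mact A x - mact B x := by
  simp [mact]

lemma mact_sum_smul {Ω : Type*} [Fintype Ω] (p : Ω → ℝ) (A : Ω → Matrix (Fin d) (Fin d) ℝ)
    (x : Vec d) : mact (∑ s, p s • A s) x = ∑ s, p s • mact (A s) x := by
  simp [mact, map_sum, LinearMap.sum_apply]

lemma inner_mact_transpose (M : Matrix (Fin d) (Fin d) ℝ) (x y : Vec d) :
    ⟪x, mact Mᵀ y⟫ = ⟪mact M x, y⟫ := by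
  rw [inner_eq_dotProduct, inner_eq_dotProduct, ofLp_mact, ofLp_mact, mulVec_transpose,
    dotProduct_comm, ← dotProduct_mulVec, dotProduct_comm]

lemma quad_transpose_mul_mul (N M : Matrix (Fin d) (Fin d) ℝ) (x : Vec d) :
    quad (Nᵀ * M * N) x = quad M (mact N x) := by
  rw [quad, mact_mul, mact_mul, inner_mact_transpose, quad]

lemma norm_mact_sq (N : Matrix (Fin d) (Fin d) ℝ) (x : Vec d) :
    ‖mact N x‖ ^ 2 = quad (Nᵀ * N) x := by
  rw [← mul_one Nᵀ, quad_transpose_mul_mul, quad, mact_one, real_inner_self_eq_norm_sq]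

lemma quad_sum_smul {Ω : Type*} [Fintype Ω] (p : Ω → ℝ) (M : Ω → Matrix (Fin d) (Fin d) ℝ)
    (x : Vec d) : quad (∑ s, p s • M s) x = ∑ s, p s * quad (M s) x := by
  simp [quad, mact_sum_smul, inner_sum, inner_smul_right]

lemma quad_smul (M : Matrix (Fin d) (Fin d) ℝ) (t : ℝ) (x : Vec d) :
    quad M (t • x) = t ^ 2 * quad M x := by
  simp only [quad, mact, map_smul, real_inner_smul_left, real_inner_smul_right]
  ring

lemma quad_neg (M : Matrix (Fin d) (Fin d) ℝ) (x : Vec d) : quad M (-x) = quad M x := by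
  simpa using quad_smul M (-1) x

lemma quad_add (A B : Matrix (Fin d) (Fin d) ℝ) (x : Vec d) :
    quad (A + B) x = quad A x + quad B x := by
  simp [quad, mact, inner_add_right]

end MatrixAction

section LambdaMax

variable {d : ℕ}

lemma abs_le_one_of_dotProduct_self_eq_one {ι : Type*} [Fintype ι] {v : ι → ℝ}
    (hv : v ⬝ᵥ v = 1) (i : ι) : |v i| ≤ 1 := by
  have hi : v i * v i ≤ v ⬝ᵥ v :=
    Finset.single_le_sum (f := fun j => v j * v j) (fun j _ => mul_self_nonneg _)
      (Finset.mem_univ i)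
  exact abs_le_one_iff_mul_self_le_one.mpr (hv ▸ hi)

lemma bddAbove_rayleigh (M : Matrix (Fin d) (Fin d) ℝ) :
    BddAbove {r : ℝ | ∃ v : Fin d → ℝ, v ⬝ᵥ v = 1 ∧ r = v ⬝ᵥ M.mulVec v} := by
  refine ⟨∑ j, ∑ l, |M j l|, ?_⟩
  rintro r ⟨v, hv, rfl⟩
  have hv1 := abs_le_one_of_dotProduct_self_eq_one hv
  simp only [dotProduct, mulVec, Finset.mul_sum]
  gcongr with j _ l _
  calc v j * (M j l * v l) ≤ |v j| * (|M j l| * |v l|) := by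
        rw [← abs_mul, ← abs_mul]; exact le_abs_self _
    _ ≤ 1 * (|M j l| * 1) := by gcongr <;> exact hv1 _
    _ = |M j l| := by ring

lemma dotProduct_mulVec_le_lambdaMax (M : Matrix (Fin d) (Fin d) ℝ) (u : Fin d → ℝ) :
    u ⬝ᵥ M *ᵥ u ≤ lambdaMax M * (u ⬝ᵥ u) := by
  rcases eq_or_ne u 0 with rfl | hu
  · simp
  have huu : 0 < u ⬝ᵥ u := by
    obtain ⟨i, hi⟩ := Function.ne_iff.mp hu
    exact Finset.sum_pos' (fun j _ => mul_self_nonneg (u j))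
      ⟨i, Finset.mem_univ i, mul_self_pos.mpr hi⟩
  set n := √(u ⬝ᵥ u)
  have hn : 0 < n := Real.sqrt_pos.mpr huu
  have hn2 : n * n = u ⬝ᵥ u := Real.mul_self_sqrt huu.le
  have hunit : (n⁻¹ • u) ⬝ᵥ (n⁻¹ • u) = 1 := by
    simp only [smul_dotProduct, dotProduct_smul, smul_eq_mul, ← hn2]
    field_simp
  have hle := le_csSup (bddAbove_rayleigh M) ⟨n⁻¹ • u, hunit, rfl⟩
  simp only [mulVec_smul, smul_dotProduct, dotProduct_smul, smul_eq_mul] at hle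
  rw [← hn2]
  calc u ⬝ᵥ M *ᵥ u = (n⁻¹ * (n⁻¹ * (u ⬝ᵥ M *ᵥ u))) * (n * n) := by field_simp
    _ ≤ lambdaMax M * (n * n) := by gcongr; exact hle

lemma le_lambdaMax_of_forall [NeZero d] {M : Matrix (Fin d) (Fin d) ℝ} {c : ℝ}
    (h : ∀ u : Fin d → ℝ, c * (u ⬝ᵥ u) ≤ u ⬝ᵥ M *ᵥ u) : c ≤ lambdaMax M := by
  set e : Fin d → ℝ := Pi.single 0 1
  have he : e ⬝ᵥ e = 1 := by simp [e]
  have hc := h e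
  rw [he, mul_one] at hc
  exact hc.trans (le_csSup (bddAbove_rayleigh M) ⟨_, he, rfl⟩)

lemma neZero_of_lambdaMax_ne_zero {M : Matrix (Fin d) (Fin d) ℝ} (h : lambdaMax M ≠ 0) :
    NeZero d := by
  refine ⟨fun hd => h ?_⟩
  subst hd
  have hempty : {r : ℝ | ∃ v : Fin 0 → ℝ, v ⬝ᵥ v = 1 ∧ r = v ⬝ᵥ M *ᵥ v} = ∅ := by
    ext r
    simp
  rw [lambdaMax, hempty, Real.sSup_empty]

lemma quad_le_lambdaMax (M : Matrix (Fin d) (Fin d) ℝ) (x : Vec d) :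
    quad M x ≤ lambdaMax M * ‖x‖ ^ 2 := by
  rw [quad_eq_dotProduct, norm_sq_eq_dotProduct]
  exact dotProduct_mulVec_le_lambdaMax M _

lemma le_lambdaMax_of_forall_quad [NeZero d] {M : Matrix (Fin d) (Fin d) ℝ} {c : ℝ}
    (h : ∀ x : Vec d, c * ‖x‖ ^ 2 ≤ quad M x) : c ≤ lambdaMax M :=
  le_lambdaMax_of_forall fun u => by
    simpa [quad_eq_dotProduct, norm_sq_eq_dotProduct] using h (WithLp.toLp 2 u)

end LambdaMax

section SecondMoment

variable {d : ℕ} {Ω : Type*} [Fintype Ω]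

lemma sum_smul_diagonal_mul_mul_diagonal (p : Ω → ℝ) (w : Ω → Fin d → ℝ)
    (M : Matrix (Fin d) (Fin d) ℝ) :
    ∑ s, p s • (diagonal (w s) * M * diagonal (w s))
      = (of fun j l => ∑ s, p s * (w s j * w s l)) ⊙ M := by
  ext j l
  simp only [Matrix.sum_apply, Matrix.smul_apply, mul_diagonal, diagonal_mul, hadamard_apply,
    of_apply, Finset.sum_mul, smul_eq_mul]
  exact Finset.sum_congr rfl fun s _ => by ring

lemma sum_mul_norm_mact_sq_le (p : Ω → ℝ) (B : Ω → Matrix (Fin d) (Fin d) ℝ)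
    (hB : ∀ s, (B s)ᵀ = B s) {LL Lh Ldh Ldag : Matrix (Fin d) (Fin d) ℝ}
    (hLh : Lhᵀ = Lh) (hLh2 : Lh * Lh = LL) (hLdh : Ldhᵀ = Ldh) (hLdh2 : Ldh * Ldh = Ldag)
    (y : Vec d) :
    ∑ s, p s * ‖mact (Lh * B s * Ldh) y‖ ^ 2
      ≤ lambdaMax (∑ s, p s • (B s * LL * B s)) * quad Ldag y := by
  have h : ∀ s, ‖mact (Lh * B s * Ldh) y‖ ^ 2 = quad (B s * LL * B s) (mact Ldh y) := fun s => by
    rw [norm_mact_sq, ← quad_transpose_mul_mul]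
    simp only [transpose_mul, hB, hLh, hLdh, ← hLh2, Matrix.mul_assoc]
  simp only [h, ← quad_sum_smul]
  calc _ ≤ _ * ‖mact Ldh y‖ ^ 2 := quad_le_lambdaMax _ _
    _ = _ := by rw [norm_mact_sq, hLdh, hLdh2]

end SecondMoment

namespace Sampling

variable {d : ℕ} (μ : Sampling d)

def sketchDiag (S : Finset (Fin d)) (j : Fin d) : ℝ := if j ∈ S then (μ.marg j)⁻¹ else 0

lemma sketch_eq_diagonal (S : Finset (Fin d)) : μ.sketch S = diagonal (μ.sketchDiag S) := rfl

lemma sum_prob_mul_sketchDiag (j : Fin d) : ∑ S, μ.prob S * μ.sketchDiag S j = 1 := by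
  have h : ∀ S, μ.prob S * μ.sketchDiag S j = (if j ∈ S then μ.prob S else 0) * (μ.marg j)⁻¹ :=
    fun S => by by_cases hj : j ∈ S <;> simp [sketchDiag, hj]
  rw [Finset.sum_congr rfl fun S _ => h S, ← Finset.sum_mul]
  exact mul_inv_cancel₀ (μ.margPos j).ne'

lemma sum_prob_mul_sketchDiag_mul (j l : Fin d) :
    ∑ S, μ.prob S * (μ.sketchDiag S j * μ.sketchDiag S l) = μ.Pbar j l := by
  have h : ∀ S, μ.prob S * (μ.sketchDiag S j * μ.sketchDiag S l)
      = (if j ∈ S ∧ l ∈ S then μ.prob S else 0) * ((μ.marg j)⁻¹ * (μ.marg l)⁻¹) :=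
    fun S => by by_cases hj : j ∈ S <;> by_cases hl : l ∈ S <;> simp [sketchDiag, hj, hl]
  rw [Finset.sum_congr rfl fun S _ => h S, ← Finset.sum_mul, Pbar, of_apply, div_eq_mul_inv,
    mul_inv]
  rfl

lemma sum_prob_mul_sketchDiag_sub_one_mul (j l : Fin d) :
    ∑ S, μ.prob S * ((μ.sketchDiag S j - 1) * (μ.sketchDiag S l - 1)) = μ.Ptilde j l := by
  have h : ∀ S, μ.prob S * ((μ.sketchDiag S j - 1) * (μ.sketchDiag S l - 1))
      = μ.prob S * (μ.sketchDiag S j * μ.sketchDiag S l) - μ.prob S * μ.sketchDiag S j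
        - μ.prob S * μ.sketchDiag S l + μ.prob S := fun S => by ring
  simp only [Finset.sum_congr rfl fun S _ => h S, Finset.sum_add_distrib, Finset.sum_sub_distrib,
    sum_prob_mul_sketchDiag_mul, sum_prob_mul_sketchDiag, μ.total, Ptilde, Matrix.sub_apply,
    of_apply]
  ring

lemma sum_smul_sketch : ∑ S, μ.prob S • μ.sketch S = 1 := by
  ext j l
  rcases eq_or_ne j l with rfl | hjl
  · simp [Matrix.sum_apply, sketch_eq_diagonal, sum_prob_mul_sketchDiag]
  · simp [Matrix.sum_apply, sketch_eq_diagonal, hjl]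

variable {LL Lh Ldh Ldag : Matrix (Fin d) (Fin d) ℝ}

lemma sum_smul_sketch_mul_mul_sketch (M : Matrix (Fin d) (Fin d) ℝ) :
    ∑ S, μ.prob S • (μ.sketch S * M * μ.sketch S) = μ.Pbar ⊙ M := by
  simp only [sketch_eq_diagonal, sum_smul_diagonal_mul_mul_diagonal,
    sum_prob_mul_sketchDiag_mul]
  rfl

lemma sketch_sub_one (S : Finset (Fin d)) :
    μ.sketch S - 1 = diagonal fun j => μ.sketchDiag S j - 1 := by
  rw [sketch_eq_diagonal, ← diagonal_one, diagonal_sub]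

lemma sum_smul_sketch_sub_one_mul_mul (M : Matrix (Fin d) (Fin d) ℝ) :
    ∑ S, μ.prob S • ((μ.sketch S - 1) * M * (μ.sketch S - 1)) = μ.Ptilde ⊙ M := by
  simp only [sketch_sub_one, sum_smul_diagonal_mul_mul_diagonal,
    sum_prob_mul_sketchDiag_sub_one_mul]
  rfl

lemma sum_prob_mul_norm_mact_sketch_sq_le (hLh : Lhᵀ = Lh) (hLh2 : Lh * Lh = LL)
    (hLdh : Ldhᵀ = Ldh) (hLdh2 : Ldh * Ldh = Ldag) (y : Vec d) :
    ∑ S, μ.prob S * ‖mact (Lh * μ.sketch S * Ldh) y‖ ^ 2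
      ≤ lambdaMax (μ.Pbar ⊙ LL) * quad Ldag y := by
  rw [← sum_smul_sketch_mul_mul_sketch]
  exact sum_mul_norm_mact_sq_le _ _ (fun S => diagonal_transpose _) hLh hLh2 hLdh hLdh2 y

lemma sum_prob_mul_norm_mact_sketch_sub_sq_le (hLh : Lhᵀ = Lh) (hLh2 : Lh * Lh = LL)
    (hLdh : Ldhᵀ = Ldh) (hLdh2 : Ldh * Ldh = Ldag) (hLhLdh : Lh * Ldh = 1) (y : Vec d) :
    ∑ S, μ.prob S * ‖mact (Lh * μ.sketch S * Ldh) y - y‖ ^ 2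
      ≤ lambdaMax (μ.Ptilde ⊙ LL) * quad Ldag y := by
  have h : ∀ S, mact (Lh * μ.sketch S * Ldh) y - y = mact (Lh * (μ.sketch S - 1) * Ldh) y :=
    fun S => by rw [Matrix.mul_sub, Matrix.sub_mul, mul_one, hLhLdh, sub_mact, mact_one]
  simp only [h, ← sum_smul_sketch_sub_one_mul_mul]
  exact sum_mul_norm_mact_sq_le _ _ (fun S => by rw [sketch_sub_one, diagonal_transpose])
    hLh hLh2 hLdh hLdh2 y

lemma sum_smul_mul_sketch_mul (hLhLdh : Lh * Ldh = 1) :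
    ∑ S, μ.prob S • (Lh * μ.sketch S * Ldh) = 1 := by
  calc ∑ S, μ.prob S • (Lh * μ.sketch S * Ldh) = Lh * (∑ S, μ.prob S • μ.sketch S) * Ldh := by
        simp only [Finset.mul_sum, Finset.sum_mul, Matrix.mul_smul, Matrix.smul_mul]
    _ = 1 := by rw [sum_smul_sketch, mul_one, hLhLdh]

lemma quad_le_quad_hadamard_Pbar {M : Matrix (Fin d) (Fin d) ℝ} (hM : ∀ x : Vec d, 0 ≤ quad M x)
    (x : Vec d) : quad M x ≤ quad (μ.Pbar ⊙ M) x := by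
  have hsplit : μ.Pbar ⊙ M = M + μ.Ptilde ⊙ M := by
    ext j l
    simp only [hadamard_apply, Matrix.add_apply, Ptilde, Matrix.sub_apply, of_apply]
    ring
  have hPtilde : 0 ≤ quad (μ.Ptilde ⊙ M) x := by
    rw [← sum_smul_sketch_sub_one_mul_mul, quad_sum_smul]
    refine Finset.sum_nonneg fun S _ => mul_nonneg (μ.nonneg S) ?_
    have h := quad_transpose_mul_mul (μ.sketch S - 1) M x
    rw [sketch_sub_one, diagonal_transpose] at h
    rw [sketch_sub_one]
    exact h ▸ hM _
  rw [hsplit, quad_add]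
  linarith

end Sampling

section Inverses

variable {d : ℕ}

lemma mul_norm_sq_le_quad {f : Vec d → ℝ} {M : Matrix (Fin d) (Fin d) ℝ} {mu : ℝ}
    (hsmooth : MSmooth f M)
    (hsc : ∀ x y : Vec d, f y + ⟪gradient f y, x - y⟫ + mu / 2 * ‖x - y‖ ^ 2 ≤ f x) (x : Vec d) :
    mu * ‖x‖ ^ 2 ≤ quad M x := by
  have h1 := hsmooth x 0
  have h2 := hsc x 0
  rw [sub_zero] at h1 h2
  linarith

lemma isUnit_of_mul_norm_sq_le_quad {M : Matrix (Fin d) (Fin d) ℝ} {mu : ℝ} (hmu : 0 < mu)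
    (h : ∀ x : Vec d, mu * ‖x‖ ^ 2 ≤ quad M x) : IsUnit M := by
  refine mulVec_injective_iff_isUnit.mp fun u v huv => ?_
  have hw : quad M (WithLp.toLp 2 (u - v)) = 0 := by
    rw [quad_eq_dotProduct, WithLp.ofLp_toLp, mulVec_sub, huv, sub_self, dotProduct_zero]
  have hnorm := h (WithLp.toLp 2 (u - v))
  rw [hw] at hnorm
  have : WithLp.toLp 2 (u - v) = 0 := by
    rw [← norm_eq_zero, ← sq_eq_zero_iff]
    exact le_antisymm (nonpos_of_mul_nonpos_right hnorm hmu) (sq_nonneg _)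
  simpa [sub_eq_zero] using this

lemma IsMoorePenrose.mul_eq_one {n : Type*} [Fintype n] [DecidableEq n] {M Mdag : Matrix n n ℝ}
    (h : IsMoorePenrose M Mdag) (hM : IsUnit M) : M * Mdag = 1 :=
  hM.mul_left_injective (by simp only [h.1, one_mul])

lemma IsMoorePenrose.eq_inv {n : Type*} [Fintype n] [DecidableEq n] {M Mdag : Matrix n n ℝ}
    (h : IsMoorePenrose M Mdag) (hM : IsUnit M) : Mdag = M⁻¹ :=
  (inv_eq_right_inv (h.mul_eq_one hM)).symm

open scoped MatrixOrder in
lemma Matrix.PosSemidef.mul_eq_one_of_mul_self_eq_inv {n : Type*} [Fintype n] [DecidableEq n]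
    {A B M : Matrix n n ℝ} (hA : A.PosSemidef) (hB : B.PosSemidef) (hAA : A * A = M)
    (hBB : B * B = M⁻¹) (hM : IsUnit M) : A * B = 1 := by
  have hdet : IsUnit A.det := by
    rw [isUnit_iff_isUnit_det, ← hAA, det_mul] at hM
    exact isUnit_of_mul_isUnit_left hM
  have hBA : B = A⁻¹ := by
    refine (CFC.mul_self_eq_mul_self_iff B A⁻¹ hB.nonneg hA.inv.nonneg).mp ?_
    rw [hBB, ← hAA, Matrix.mul_inv_rev]
  rw [hBA, mul_nonsing_inv A hdet]

end Inverses

open Filter Topology in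
lemma le_of_forall_mem_Ioc_le_add_mul {a b c : ℝ}
    (h : ∀ t ∈ Set.Ioc (0 : ℝ) 1, a ≤ b + t * c) : a ≤ b := by
  have hlim : Tendsto (fun t : ℝ => b + t * c) (𝓝[>] 0) (𝓝 b) := by
    have h0 := (Continuous.tendsto (f := fun t : ℝ => b + t * c) (by fun_prop) 0).mono_left
      (nhdsWithin_le_nhds (s := Set.Ioi 0))
    simpa using h0
  exact ge_of_tendsto hlim (Filter.mem_of_superset (Ioc_mem_nhdsGT one_pos) h)

namespace ProperConvexLsc

variable {d : ℕ} {R : Vec d → EReal} {γ : ℝ}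

lemma coe_toReal (hR : ProperConvexLsc R) {x : Vec d} (hx : R x ≠ ⊤) :
    ((R x).toReal : EReal) = R x :=
  EReal.coe_toReal hx (hR.1 x)

lemma ne_top_of_forall_le (hR : ProperConvexLsc R) (hγ : 0 < γ) {φ : Vec d → ℝ} {u : Vec d}
    (hu : ∀ v, (γ : EReal) * R u + (φ u : EReal) ≤ γ * R v + φ v) : R u ≠ ⊤ := by
  intro htop
  obtain ⟨v, hv⟩ := hR.2.1
  have h := hu v
  rw [htop, EReal.coe_mul_top_of_pos hγ, EReal.top_add_coe, ← hR.coe_toReal hv] at h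
  exact (EReal.coe_lt_top (γ * (R v).toReal + φ v)).not_ge (mod_cast h)

/-- The slope of `γ R + φ` at its minimizer `u` in the direction of `w` is nonnegative. -/
lemma mul_sub_le_inner (hR : ProperConvexLsc R) (hγ : 0 < γ) {φ : Vec d → ℝ} {u w g : Vec d} {C : ℝ}
    (hu : ∀ v, (γ : EReal) * R u + (φ u : EReal) ≤ γ * R v + φ v)
    (hφ : ∀ t : ℝ, 0 < t → φ (u + t • (w - u)) ≤ φ u + t * ⟪g, w - u⟫ + t ^ 2 * C)
    (hw : R w ≠ ⊤) : γ * ((R u).toReal - (R w).toReal) ≤ ⟪g, w - u⟫ := by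
  set a := (R u).toReal
  set b := (R w).toReal
  have ha : R u = a := (hR.coe_toReal (hR.ne_top_of_forall_le hγ hu)).symm
  have hb : R w = b := (hR.coe_toReal hw).symm
  refine le_of_forall_mem_Ioc_le_add_mul (c := C) fun t ⟨ht0, ht1⟩ => ?_
  set wt := u + t • (w - u)
  have hconv : R wt ≤ ((1 - t) * a + t * b : ℝ) := by
    have h := hR.2.2.1 u w (1 - t) t (by linarith) ht0.le (by ring)
    rw [ha, hb] at h
    convert h using 2
    · simp only [wt]; module
    · push_cast; rfl
  have hwt : R wt ≠ ⊤ := ne_top_of_le_ne_top (EReal.coe_ne_top _) hconv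
  have hr : (R wt).toReal ≤ (1 - t) * a + t * b := by
    rw [← hR.coe_toReal hwt] at hconv; exact_mod_cast hconv
  have hmin : γ * a + φ u ≤ γ * (R wt).toReal + φ wt := by
    have h := hu wt
    rw [ha, ← hR.coe_toReal hwt] at h
    exact_mod_cast h
  have hφt := hφ t ht0
  have key : t * (γ * (a - b)) ≤ t * (⟪g, w - u⟫ + t * C) := by
    nlinarith [mul_le_mul_of_nonneg_left hr hγ.le]
  exact le_of_mul_le_mul_left key ht0

end ProperConvexLsc

namespace IsProxPt

variable {d : ℕ} {R : Vec d → EReal} {γ : ℝ} {z z' u u' : Vec d}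

lemma ne_top (hR : ProperConvexLsc R) (hγ : 0 < γ) (hu : IsProxPt R γ z u) : R u ≠ ⊤ :=
  hR.ne_top_of_forall_le hγ (φ := fun v => 1 / 2 * ‖v - z‖ ^ 2) hu.1

lemma inner_le (hR : ProperConvexLsc R) (hγ : 0 < γ) (hu : IsProxPt R γ z u) {w : Vec d}
    (hw : R w ≠ ⊤) : γ * ((R u).toReal - (R w).toReal) ≤ ⟪u - z, w - u⟫ := by
  refine hR.mul_sub_le_inner hγ (φ := fun v => 1 / 2 * ‖v - z‖ ^ 2) (C := 1 / 2 * ‖w - u‖ ^ 2)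
    hu.1 (fun t _ => le_of_eq ?_) hw
  rw [show u + t • (w - u) - z = (u - z) + t • (w - u) by abel, norm_add_sq_real, norm_smul,
    inner_smul_right, mul_pow, Real.norm_eq_abs, sq_abs]
  ring

lemma norm_sub_le (hR : ProperConvexLsc R) (hγ : 0 < γ) (hu : IsProxPt R γ z u)
    (hu' : IsProxPt R γ z' u') : ‖u - u'‖ ≤ ‖z - z'‖ := by
  have h := add_le_add (hu.inner_le hR hγ (hu'.ne_top hR hγ)) (hu'.inner_le hR hγ (hu.ne_top hR hγ))
  have key : ⟪u - z, u' - u⟫ + ⟪u' - z', u - u'⟫ = ⟪z - z', u - u'⟫ - ‖u - u'‖ ^ 2 := by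
    rw [← real_inner_self_eq_norm_sq, ← inner_sub_left, ← neg_sub u u', inner_neg_right,
      neg_add_eq_sub, ← inner_sub_left]
    congr 1; abel
  have hsq : ‖u - u'‖ ^ 2 ≤ ‖z - z'‖ * ‖u - u'‖ := by
    nlinarith [real_inner_le_norm (z - z') (u - u')]
  nlinarith [norm_nonneg (u - u'), norm_nonneg (z - z')]

end IsProxPt

section Optimality

variable {d : ℕ} {f : Vec d → ℝ} {M : Matrix (Fin d) (Fin d) ℝ}

lemma prox_sub_smul_gradient_eq {R : Vec d → EReal} {γ : ℝ} {proxR : Vec d → Vec d}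
    {xstar : Vec d} (hR : ProperConvexLsc R) (hγ : 0 < γ) (hsmooth : MSmooth f M)
    (hmin : ∀ x : Vec d, (f xstar : EReal) + R xstar ≤ (f x : EReal) + R x)
    (hprox : ∀ z : Vec d, IsProxPt R γ z (proxR z)) :
    proxR (xstar - γ • gradient f xstar) = xstar := by
  set g := gradient f xstar
  have hmin' : ∀ v, ((1 : ℝ) : EReal) * R xstar + (f xstar : EReal) ≤ (1 : ℝ) * R v + f v :=
    fun v => by simpa only [EReal.coe_one, one_mul, add_comm] using hmin v
  have hopt : ∀ w, R w ≠ ⊤ → (R xstar).toReal - (R w).toReal ≤ ⟪g, w - xstar⟫ := by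
    intro w hw
    refine (one_mul (_ : ℝ)).symm.trans_le
      (hR.mul_sub_le_inner one_pos hmin' (C := 1 / 2 * quad M (w - xstar)) (fun t _ => ?_) hw)
    have h := hsmooth (xstar + t • (w - xstar)) xstar
    rw [add_sub_cancel_left, inner_smul_right, quad_smul] at h
    linarith
  refine ((hprox _).2 xstar fun w => ?_).symm
  by_cases hw : R w = ⊤
  · rw [hw, EReal.coe_mul_top_of_pos hγ, EReal.top_add_coe]
    exact le_top
  rw [← hR.coe_toReal hw, ← hR.coe_toReal (hR.ne_top_of_forall_le one_pos hmin')]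
  norm_cast
  rw [sub_sub_cancel, show w - (xstar - γ • g) = (w - xstar) + γ • g by abel, norm_add_sq_real,
    norm_smul, inner_smul_right, real_inner_comm, mul_pow, Real.norm_eq_abs, sq_abs]
  nlinarith [mul_le_mul_of_nonneg_left (hopt w hw) hγ.le, sq_nonneg ‖w - xstar‖]

def bregman (f : Vec d → ℝ) (x y : Vec d) : ℝ := f x - f y - ⟪gradient f y, x - y⟫

lemma quad_sub_gradient_le_bregman {Minv : Matrix (Fin d) (Fin d) ℝ} (hsmooth : MSmooth f M)
    (hgrad : ∀ x y : Vec d, f y + ⟪gradient f y, x - y⟫ ≤ f x) (hMinv : M * Minv = 1)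
    (x y : Vec d) :
    quad Minv (gradient f x - gradient f y) ≤ 2 * bregman f x y := by
  set h := gradient f x - gradient f y
  set m := mact Minv h
  have hqM : quad M m = quad Minv h := by
    rw [quad, ← mact_mul, hMinv, mact_one, real_inner_comm]
    rfl
  have hinner : ⟪gradient f x, m⟫ - ⟪gradient f y, m⟫ = quad Minv h := by
    rw [← inner_sub_left, quad, real_inner_comm]
  have hup := hsmooth (x - m) x
  have hlow := hgrad (x - m) y
  rw [sub_sub_cancel_left, inner_neg_right, quad_neg, hqM] at hup
  rw [sub_right_comm, inner_sub_right] at hlow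
  rw [bregman]
  linarith

lemma sum_mul_norm_mact_gradient_sub_sq_le {Ω : Type*} [Fintype Ω] {p : Ω → ℝ}
    {A : Ω → Matrix (Fin d) (Fin d) ℝ} {Minv : Matrix (Fin d) (Fin d) ℝ} {Lb : ℝ} (hLb : 0 ≤ Lb)
    (hA : ∀ y, ∑ s, p s * ‖mact (A s) y‖ ^ 2 ≤ Lb * quad Minv y) (hsmooth : MSmooth f M)
    (hgrad : ∀ x y : Vec d, f y + ⟪gradient f y, x - y⟫ ≤ f x) (hMinv : M * Minv = 1)
    (x y : Vec d) :
    ∑ s, p s * ‖mact (A s) (gradient f x - gradient f y)‖ ^ 2 ≤ 2 * Lb * bregman f x y := by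
  have h := mul_le_mul_of_nonneg_left (quad_sub_gradient_le_bregman hsmooth hgrad hMinv x y) hLb
  linarith [hA (gradient f x - gradient f y)]

end Optimality

lemma pos_and_two_mul_le_one_of_le_one_div {γ L : ℝ} (hγ : 0 < γ) (h : γ ≤ 1 / (2 * L)) :
    0 < L ∧ 2 * γ * L ≤ 1 := by
  -- `1 / 0 = 0`, so `0 < γ ≤ 1 / (2 * L)` rules out `L ≤ 0`
  have hL : 0 < L := by
    by_contra! hL
    have : 1 / (2 * L) ≤ 0 := one_div_nonpos.mpr (by linarith)
    linarith
  refine ⟨hL, ?_⟩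
  rw [le_div_iff₀ (by positivity)] at h
  linarith

lemma norm_add_sq_le_two_mul {E : Type*} [NormedAddCommGroup E] [InnerProductSpace ℝ E] (a b : E) :
    ‖a + b‖ ^ 2 ≤ 2 * ‖a‖ ^ 2 + 2 * ‖b‖ ^ 2 := by
  nlinarith [parallelogram_law_with_norm ℝ a b, sq_nonneg ‖a - b‖]

section OneStep

variable {d : ℕ} {Ω : Type*} [Fintype Ω] {p : Ω → ℝ} {A : Ω → Matrix (Fin d) (Fin d) ℝ}
  {f : Vec d → ℝ} {mu Lb γ : ℝ} {xstar : Vec d} {proxR : Vec d → Vec d}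

lemma sum_mul_inner_mact (hA : ∑ s, p s • A s = 1) (v y : Vec d) :
    ∑ s, p s * ⟪v, mact (A s) y⟫ = ⟪v, y⟫ := by
  simp only [← inner_smul_right, ← inner_sum, ← mact_sum_smul, hA, mact_one]

/-- `hES` is the expected smoothness of the sketched gradients. -/
theorem sum_mul_norm_prox_sub_sq_le (hp : ∀ s, 0 ≤ p s) (hp1 : ∑ s, p s = 1)
    (hA : ∑ s, p s • A s = 1) (hmu : 0 ≤ mu)
    (hsc : ∀ x y : Vec d, f y + ⟪gradient f y, x - y⟫ + mu / 2 * ‖x - y‖ ^ 2 ≤ f x)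
    (hES : ∀ x, ∑ s, p s * ‖mact (A s) (gradient f x - gradient f xstar)‖ ^ 2
      ≤ 2 * Lb * bregman f x xstar)
    (hγ : 0 < γ) (hγLb : 2 * γ * Lb ≤ 1) (hprox : LipschitzWith 1 proxR)
    (hfix : proxR (xstar - γ • gradient f xstar) = xstar) (x : Vec d) :
    ∑ s, p s * ‖proxR (x - γ • mact (A s) (gradient f x)) - xstar‖ ^ 2
      ≤ (1 - γ * mu) * ‖x - xstar‖ ^ 2
        + 2 * γ ^ 2 * ∑ s, p s * ‖mact (A s) (gradient f xstar) - gradient f xstar‖ ^ 2 := by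
  set g := gradient f x
  set gs := gradient f xstar
  set v := x - xstar
  set D := bregman f x xstar
  set σ := ∑ s, p s * ‖mact (A s) gs - gs‖ ^ 2
  set a : Ω → Vec d := fun s => mact (A s) g - gs
  have hpt : ∀ s, ‖proxR (x - γ • mact (A s) g) - xstar‖ ^ 2
      ≤ ‖v‖ ^ 2 - 2 * γ * ⟪v, a s⟫ + γ ^ 2 * ‖a s‖ ^ 2 := fun s => by
    have h := hprox.dist_le_mul (x - γ • mact (A s) g) (xstar - γ • gs)
    rw [hfix, dist_eq_norm, dist_eq_norm, NNReal.coe_one, one_mul,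
      show x - γ • mact (A s) g - (xstar - γ • gs) = v - γ • a s by simp only [v, a]; module] at h
    calc _ ≤ ‖v - γ • a s‖ ^ 2 := by gcongr
      _ = _ := by
        rw [norm_sub_sq_real, norm_smul, inner_smul_right, mul_pow, Real.norm_eq_abs, sq_abs]
        ring
  have hlin : ∑ s, p s * ⟪v, a s⟫ = ⟪v, g - gs⟫ := by
    simp only [a, inner_sub_right, mul_sub, Finset.sum_sub_distrib, sum_mul_inner_mact hA,
      ← Finset.sum_mul, hp1, one_mul]
  have hquad : ∑ s, p s * ‖a s‖ ^ 2 ≤ 2 * (2 * Lb * D) + 2 * σ := by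
    have hsplit : ∀ s, a s = mact (A s) (g - gs) + (mact (A s) gs - gs) := fun s => by
      simp only [a, mact_sub]; abel
    calc ∑ s, p s * ‖a s‖ ^ 2
        ≤ ∑ s, (2 * (p s * ‖mact (A s) (g - gs)‖ ^ 2) + 2 * (p s * ‖mact (A s) gs - gs‖ ^ 2)) := by
          gcongr with s
          have h := norm_add_sq_le_two_mul (mact (A s) (g - gs)) (mact (A s) gs - gs)
          rw [← hsplit s] at h
          nlinarith [hp s]
      _ ≤ 2 * (2 * Lb * D) + 2 * σ := by
          rw [Finset.sum_add_distrib, ← Finset.mul_sum, ← Finset.mul_sum]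
          linarith [hES x]
  have hDdef : D = f x - f xstar - ⟪gs, v⟫ := rfl
  have hD : mu / 2 * ‖v‖ ^ 2 ≤ D := by
    have h := hsc x xstar
    rw [hDdef]
    linarith
  have hcross : D + mu / 2 * ‖v‖ ^ 2 ≤ ⟪v, g - gs⟫ := by
    have h : f x - ⟪v, g⟫ + mu / 2 * ‖v‖ ^ 2 ≤ f xstar := by
      have h := hsc xstar x
      rwa [← neg_sub x xstar, inner_neg_right, norm_neg, real_inner_comm, ← sub_eq_add_neg] at h
    rw [hDdef, inner_sub_right v g gs, real_inner_comm v gs]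
    linarith
  have hexp : ∑ s, p s * (‖v‖ ^ 2 - 2 * γ * ⟪v, a s⟫ + γ ^ 2 * ‖a s‖ ^ 2)
      = ‖v‖ ^ 2 - 2 * γ * ∑ s, p s * ⟪v, a s⟫ + γ ^ 2 * ∑ s, p s * ‖a s‖ ^ 2 := by
    have h : ∀ s, p s * (‖v‖ ^ 2 - 2 * γ * ⟪v, a s⟫ + γ ^ 2 * ‖a s‖ ^ 2)
        = p s * ‖v‖ ^ 2 - 2 * γ * (p s * ⟪v, a s⟫) + γ ^ 2 * (p s * ‖a s‖ ^ 2) := fun s => by ring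
    rw [Finset.sum_congr rfl fun s _ => h s, Finset.sum_add_distrib, Finset.sum_sub_distrib,
      ← Finset.sum_mul, hp1, one_mul, ← Finset.mul_sum, ← Finset.mul_sum]
  calc _ ≤ ∑ s, p s * (‖v‖ ^ 2 - 2 * γ * ⟪v, a s⟫ + γ ^ 2 * ‖a s‖ ^ 2) := by
        gcongr with s
        · exact hp s
        · exact hpt s
    _ ≤ (1 - γ * mu) * ‖v‖ ^ 2 + 2 * γ ^ 2 * σ := by
        rw [hexp, hlin]
        have h0 : 0 ≤ D := le_trans (by positivity) hD
        nlinarith [mul_le_mul_of_nonneg_left hquad (sq_nonneg γ),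
          mul_nonneg (mul_nonneg hγ.le h0) (sub_nonneg.mpr hγLb)]

end OneStep

section Trajectory

variable {V Ω : Type*} {P : Ω → ℝ} {x0 : V} {step : V → Ω → V}

lemma traj_snoc (k : ℕ) (ω : Fin k → Ω) (s : Ω) :
    traj x0 step (k + 1) (Fin.snoc ω s) = step (traj x0 step k ω) s := by
  simp [traj]

variable [Fintype Ω]

lemma trajExp_succ (φ : V → ℝ) (k : ℕ) :
    trajExp P x0 step φ (k + 1) = trajExp P x0 step (fun x => ∑ s, P s * φ (step x s)) k := by
  rw [trajExp, ← (Fin.snocEquiv fun _ => Ω).sum_comp, Fintype.sum_prod_type, Finset.sum_comm]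
  refine Finset.sum_congr rfl fun ω _ => ?_
  rw [Finset.mul_sum]
  refine Finset.sum_congr rfl fun s _ => ?_
  rw [show (Fin.snocEquiv fun _ => Ω) (s, ω) = Fin.snoc ω s from rfl, traj_snoc,
    Fin.prod_univ_castSucc]
  simp only [Fin.snoc_castSucc, Fin.snoc_last]
  ring

lemma trajExp_mono (hP : ∀ s, 0 ≤ P s) {φ ψ : V → ℝ} (h : ∀ x, φ x ≤ ψ x) (k : ℕ) :
    trajExp P x0 step φ k ≤ trajExp P x0 step ψ k :=
  Finset.sum_le_sum fun ω _ =>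
    mul_le_mul_of_nonneg_left (h _) (Finset.prod_nonneg fun i _ => hP (ω i))

lemma trajExp_mul_add (hP1 : ∑ s, P s = 1) (φ : V → ℝ) (a c : ℝ) (k : ℕ) :
    trajExp P x0 step (fun x => a * φ x + c) k = a * trajExp P x0 step φ k + c := by
  have hprod : ∑ ω : Fin k → Ω, ∏ i, P (ω i) = 1 := by
    rw [← Fintype.piFinset_univ, ← Finset.prod_univ_sum]
    simp [hP1]
  simp only [trajExp, mul_add, Finset.sum_add_distrib, ← Finset.sum_mul, hprod, one_mul,
    Finset.mul_sum]
  congr 1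
  exact Finset.sum_congr rfl fun ω _ => by ring

theorem trajExp_le_of_forall_sum_le (hP : ∀ s, 0 ≤ P s) (hP1 : ∑ s, P s = 1) {φ : V → ℝ}
    {ρ c : ℝ} (hρ0 : 0 ≤ ρ) (hρ1 : ρ < 1) (hc : 0 ≤ c)
    (hstep : ∀ x, ∑ s, P s * φ (step x s) ≤ ρ * φ x + c) (k : ℕ) :
    trajExp P x0 step φ k ≤ ρ ^ k * φ x0 + c / (1 - ρ) := by
  induction k with
  | zero =>
    simp only [trajExp, Finset.univ_unique, Finset.sum_singleton, Finset.univ_eq_empty,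
      Finset.prod_empty, traj, one_mul, pow_zero]
    have : 0 ≤ c / (1 - ρ) := div_nonneg hc (by linarith)
    linarith
  | succ k ih =>
    calc trajExp P x0 step φ (k + 1) ≤ trajExp P x0 step (fun x => ρ * φ x + c) k := by
          rw [trajExp_succ]; exact trajExp_mono hP hstep k
      _ = ρ * trajExp P x0 step φ k + c := trajExp_mul_add hP1 φ ρ c k
      _ ≤ ρ * (ρ ^ k * φ x0 + c / (1 - ρ)) + c := by gcongr
      _ = ρ ^ (k + 1) * φ x0 + c / (1 - ρ) := by
          field_simp [(sub_pos.mpr hρ1).ne']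
          ring

end Trajectory

theorem statement7_general {d : ℕ} (μsamp : Sampling d) (f : Vec d → ℝ)
    (LL Lh Ldag Ldh : Matrix (Fin d) (Fin d) ℝ)
    (hLh : Lh.PosSemidef) (hLh2 : Lh * Lh = LL)
    (hdag : IsMoorePenrose LL Ldag) (hLdh : Ldh.PosSemidef) (hLdh2 : Ldh * Ldh = Ldag)
    (hsmooth : MSmooth f LL)
    (mu : ℝ) (hmu : 0 < mu)
    (hsc : ∀ x y : Vec d, f y + ⟪gradient f y, x - y⟫ + mu / 2 * ‖x - y‖ ^ 2 ≤ f x)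
    (R : Vec d → EReal) (hR : ProperConvexLsc R)
    (xstar : Vec d) (hmin : ∀ x : Vec d, (f xstar : EReal) + R xstar ≤ (f x : EReal) + R x)
    (γ : ℝ) (hγ : 0 < γ) (hγ' : γ ≤ 1 / (2 * lambdaMax (Matrix.hadamard μsamp.Pbar LL)))
    (proxR : Vec d → Vec d) (hprox : ∀ z : Vec d, IsProxPt R γ z (proxR z))
    (x0 : Vec d) :
    ∀ k : ℕ,
      trajExp μsamp.prob x0
          (fun x S => proxR (x - γ • mact (Lh * μsamp.sketch S * Ldh) (gradient f x)))
          (fun x => ‖x - xstar‖ ^ 2) k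
        ≤ (1 - γ * mu) ^ k * ‖x0 - xstar‖ ^ 2
          + 2 * γ * lambdaMax (Matrix.hadamard μsamp.Ptilde LL) / mu
              * quad Ldag (gradient f xstar) := by
  intro k
  have hLhT : Lhᵀ = Lh := hLh.1
  have hLdhT : Ldhᵀ = Ldh := hLdh.1
  have hLLquad := mul_norm_sq_le_quad hsmooth hsc
  have hLL : IsUnit LL := isUnit_of_mul_norm_sq_le_quad hmu hLLquad
  have hLhLdh : Lh * Ldh = 1 :=
    hLh.mul_eq_one_of_mul_self_eq_inv hLdh hLh2 (hLdh2.trans (hdag.eq_inv hLL)) hLL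
  obtain ⟨hLb, hγLb⟩ := pos_and_two_mul_le_one_of_le_one_div hγ hγ'
  have : NeZero d := neZero_of_lambdaMax_ne_zero hLb.ne'
  have hmuLb : mu ≤ lambdaMax (μsamp.Pbar ⊙ LL) := le_lambdaMax_of_forall_quad fun x =>
    (hLLquad x).trans (μsamp.quad_le_quad_hadamard_Pbar (fun y => by nlinarith [hLLquad y]) x)
  have hgrad : ∀ x y : Vec d, f y + ⟪gradient f y, x - y⟫ ≤ f x := fun x y => by
    nlinarith [hsc x y, sq_nonneg ‖x - y‖]
  have hstep := sum_mul_norm_prox_sub_sq_le μsamp.nonneg μsamp.total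
    (μsamp.sum_smul_mul_sketch_mul hLhLdh) hmu.le hsc
    (fun x => sum_mul_norm_mact_gradient_sub_sq_le hLb.le
      (μsamp.sum_prob_mul_norm_mact_sketch_sq_le hLhT hLh2 hLdhT hLdh2) hsmooth hgrad
      (hdag.mul_eq_one hLL) x xstar) hγ hγLb
    (LipschitzWith.mk_one fun z z' => by
      simpa only [dist_eq_norm] using (hprox z).norm_sub_le hR hγ (hprox z'))
    (prox_sub_smul_gradient_eq hR hγ hsmooth hmin hprox)
  have hσ := μsamp.sum_prob_mul_norm_mact_sketch_sub_sq_le hLhT hLh2 hLdhT hLdh2 hLhLdh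
    (gradient f xstar)
  set σ := ∑ S, μsamp.prob S *
    ‖mact (Lh * μsamp.sketch S * Ldh) (gradient f xstar) - gradient f xstar‖ ^ 2
  have hσ0 : 0 ≤ σ := Finset.sum_nonneg fun S _ => mul_nonneg (μsamp.nonneg S) (sq_nonneg _)
  refine (trajExp_le_of_forall_sum_le μsamp.nonneg μsamp.total (by nlinarith) (by nlinarith)
    (by positivity) hstep k).trans (add_le_add le_rfl ?_)
  rw [sub_sub_cancel]
  calc 2 * γ ^ 2 * σ / (γ * mu) = 2 * γ / mu * σ := by field_simp
    _ ≤ 2 * γ / mu * (lambdaMax (μsamp.Ptilde ⊙ LL) * quad Ldag (gradient f xstar)) := by gcongr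
    _ = _ := by ring

/-- CGD+ convergence. -/
theorem statement7 {d : ℕ} (μsamp : Sampling d) (f : Vec d → ℝ)
    (LL Lh Ldag Ldh : Matrix (Fin d) (Fin d) ℝ)
    (hLL : LL.PosSemidef) (hLh : Lh.PosSemidef) (hLh2 : Lh * Lh = LL)
    (hdag : IsMoorePenrose LL Ldag) (hLdh : Ldh.PosSemidef) (hLdh2 : Ldh * Ldh = Ldag)
    (hdiff : Differentiable ℝ f) (hconv : ConvexOn ℝ Set.univ f)
    (hbdd : BddBelow (Set.range f)) (hsmooth : MSmooth f LL)
    (mu : ℝ) (hmu : 0 < mu)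
    (hsc : ∀ x y : Vec d, f y + ⟪gradient f y, x - y⟫ + mu / 2 * ‖x - y‖ ^ 2 ≤ f x)
    (R : Vec d → EReal) (hR : ProperConvexLsc R)
    (xstar : Vec d) (hmin : ∀ x : Vec d, (f xstar : EReal) + R xstar ≤ (f x : EReal) + R x)
    (γ : ℝ) (hγ : 0 < γ) (hγ' : γ ≤ 1 / (2 * lambdaMax (Matrix.hadamard μsamp.Pbar LL)))
    (proxR : Vec d → Vec d) (hprox : ∀ z : Vec d, IsProxPt R γ z (proxR z))
    (x0 : Vec d) :
    ∀ k : ℕ,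
      trajExp μsamp.prob x0
          (fun x S => proxR (x - γ • mact (Lh * μsamp.sketch S * Ldh) (gradient f x)))
          (fun x => ‖x - xstar‖ ^ 2) k
        ≤ (1 - γ * mu) ^ k * ‖x0 - xstar‖ ^ 2
          + 2 * γ * lambdaMax (Matrix.hadamard μsamp.Ptilde LL) / mu
              * quad Ldag (gradient f xstar) :=
  statement7_general μsamp f LL Lh Ldag Ldh hLh hLh2 hdag hLdh hLdh2 hsmooth mu hmu hsc R hR xstar
    hmin γ hγ hγ' proxR hprox x0
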